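/- arXiv:2405.08788 — 3 statements merged into one kernel-verified Lean document; each statement's English description precedes it below -/
import Mathlib

section
/- Let G, H be graphs (directed multigraphs: a vertex set, an edge set, and source/target maps). Let o = (i_G : G ↪ GH, i_H : H ↪ GH) and o' = (i'_G : G ↪ GH', i'_H : H ↪ GH') be two overlaps of G and H, i.e., pairs of injective graph morphisms that are jointly surjective onto their common codomain. Suppose p : GH ↪ X is an injective morphism into some graph X. Then o and o' are equivalent (there is an isomorphism σ : GH ≅ GH' with i'_G = σ ∘ i_G and i'_H = σ ∘ i_H) if and only if there exists an injective morphism p' : GH' ↪ X with p' ∘ i'_G = p ∘ i_G and p' ∘ i'_H = p ∘ i_H. -/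
/-- A directed multigraph: vertices, edges, source and target maps. -/
structure MGraph where
  V : Type
  E : Type
  s : E → V
  t : E → V

/-- A graph morphism: maps on vertices and edges commuting with source/target. -/
structure Hom (G H : MGraph) where
  fV : G.V → H.V
  fE : G.E → H.E
  src : ∀ e, fV (G.s e) = H.s (fE e)
  tgt : ∀ e, fV (G.t e) = H.t (fE e)

def Hom.id (G : MGraph) : Hom G G :=
  ⟨_root_.id, _root_.id, fun _ => rfl, fun _ => rfl⟩

def Hom.comp {G H K : MGraph} (g : Hom H K) (f : Hom G H) : Hom G K where
  fV := g.fV ∘ f.fV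
  fE := g.fE ∘ f.fE
  src := fun e => by simp only [Function.comp_apply, f.src e, g.src (f.fE e)]
  tgt := fun e => by simp only [Function.comp_apply, f.tgt e, g.tgt (f.fE e)]

/-- A graph morphism is injective if both components are injective. -/
def Hom.Injective {G H : MGraph} (f : Hom G H) : Prop :=
  Function.Injective f.fV ∧ Function.Injective f.fE

/-- Two morphisms into a common codomain are jointly surjective if every
vertex and every edge of the codomain is in the image of one of them. -/
def JointlySurjective {G H K : MGraph} (i : Hom G K) (j : Hom H K) : Prop :=
  (∀ v : K.V, (∃ x, i.fV x = v) ∨ (∃ y, j.fV y = v)) ∧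
  (∀ e : K.E, (∃ x, i.fE x = e) ∨ (∃ y, j.fE y = e))

/-- A graph morphism is an isomorphism if it has a two-sided inverse. -/
def IsIso {G H : MGraph} (f : Hom G H) : Prop :=
  ∃ g : Hom H G, g.comp f = Hom.id G ∧ f.comp g = Hom.id H


theorem Hom.ext' {G H : MGraph} {f g : Hom G H} (hV : f.fV = g.fV)
    (hE : f.fE = g.fE) : f = g := by
  cases f; cases g; simp_all

/-- Characterisation of equivalence of overlaps: two overlaps of `G` and `H`
are equivalent (there is an isomorphism between the overlap graphs commuting
with the embeddings) iff, for an injective morphism `p : GH ↪ X`, there is an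
injective morphism `p' : GH' ↪ X` commuting with both embeddings. -/
theorem stmt_2 (G H GH GH' X : MGraph)
    (iG : Hom G GH) (iH : Hom H GH) (iG' : Hom G GH') (iH' : Hom H GH')
    (hiG : iG.Injective) (hiH : iH.Injective)
    (hiG' : iG'.Injective) (hiH' : iH'.Injective)
    (hjs : JointlySurjective iG iH) (hjs' : JointlySurjective iG' iH')
    (p : Hom GH X) (hp : p.Injective) :
    (∃ σ : Hom GH GH', IsIso σ ∧ σ.comp iG = iG' ∧ σ.comp iH = iH') ↔
      (∃ p' : Hom GH' X, p'.Injective ∧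
        p'.comp iG' = p.comp iG ∧ p'.comp iH' = p.comp iH) := by
  have hfV : ∀ {A B : MGraph} (f g : Hom A B), f = g → ∀ x, f.fV x = g.fV x :=
    fun f g h x => by rw [h]
  have hfE : ∀ {A B : MGraph} (f g : Hom A B), f = g → ∀ x, f.fE x = g.fE x :=
    fun f g h x => by rw [h]
  constructor
  · rintro ⟨σ, ⟨τ, hτσ, hστ⟩, hG, hH⟩
    have hτσV : ∀ v, τ.fV (σ.fV v) = v := fun v => hfV _ _ hτσ v
    have hτσE : ∀ e, τ.fE (σ.fE e) = e := fun e => hfE _ _ hτσ e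
    have hστV : ∀ v, σ.fV (τ.fV v) = v := fun v => hfV _ _ hστ v
    have hστE : ∀ e, σ.fE (τ.fE e) = e := fun e => hfE _ _ hστ e
    refine ⟨p.comp τ, ⟨?_, ?_⟩, ?_, ?_⟩
    · intro a b h
      have := hp.1 h
      calc a = σ.fV (τ.fV a) := (hστV a).symm
        _ = σ.fV (τ.fV b) := by rw [this]
        _ = b := hστV b
    · intro a b h
      have := hp.2 h
      calc a = σ.fE (τ.fE a) := (hστE a).symm
        _ = σ.fE (τ.fE b) := by rw [this]
        _ = b := hστE b
    · refine Hom.ext' (funext fun x => ?_) (funext fun x => ?_)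
      · show p.fV (τ.fV (iG'.fV x)) = p.fV (iG.fV x)
        rw [← hfV _ _ hG x]; simp [Hom.comp, hτσV]
      · show p.fE (τ.fE (iG'.fE x)) = p.fE (iG.fE x)
        rw [← hfE _ _ hG x]; simp [Hom.comp, hτσE]
    · refine Hom.ext' (funext fun x => ?_) (funext fun x => ?_)
      · show p.fV (τ.fV (iH'.fV x)) = p.fV (iH.fV x)
        rw [← hfV _ _ hH x]; simp [Hom.comp, hτσV]
      · show p.fE (τ.fE (iH'.fE x)) = p.fE (iH.fE x)
        rw [← hfE _ _ hH x]; simp [Hom.comp, hτσE]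
  · rintro ⟨p', ⟨hpV', hpE'⟩, hG', hH'⟩
    have hGV : ∀ x, p'.fV (iG'.fV x) = p.fV (iG.fV x) := fun x => hfV _ _ hG' x
    have hGE : ∀ x, p'.fE (iG'.fE x) = p.fE (iG.fE x) := fun x => hfE _ _ hG' x
    have hHV : ∀ x, p'.fV (iH'.fV x) = p.fV (iH.fV x) := fun x => hfV _ _ hH' x
    have hHE : ∀ x, p'.fE (iH'.fE x) = p.fE (iH.fE x) := fun x => hfE _ _ hH' x
    have hexV : ∀ v : GH.V, ∃ w : GH'.V, p'.fV w = p.fV v := by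
      intro v
      rcases hjs.1 v with ⟨x, hx⟩ | ⟨y, hy⟩
      · exact ⟨iG'.fV x, by rw [hGV, hx]⟩
      · exact ⟨iH'.fV y, by rw [hHV, hy]⟩
    have hexE : ∀ e : GH.E, ∃ f : GH'.E, p'.fE f = p.fE e := by
      intro e
      rcases hjs.2 e with ⟨x, hx⟩ | ⟨y, hy⟩
      · exact ⟨iG'.fE x, by rw [hGE, hx]⟩
      · exact ⟨iH'.fE y, by rw [hHE, hy]⟩
    have hexV' : ∀ w : GH'.V, ∃ v : GH.V, p.fV v = p'.fV w := by
      intro w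
      rcases hjs'.1 w with ⟨x, hx⟩ | ⟨y, hy⟩
      · exact ⟨iG.fV x, by rw [← hGV, hx]⟩
      · exact ⟨iH.fV y, by rw [← hHV, hy]⟩
    have hexE' : ∀ f : GH'.E, ∃ e : GH.E, p.fE e = p'.fE f := by
      intro f
      rcases hjs'.2 f with ⟨x, hx⟩ | ⟨y, hy⟩
      · exact ⟨iG.fE x, by rw [← hGE, hx]⟩
      · exact ⟨iH.fE y, by rw [← hHE, hy]⟩
    choose σV hσV using hexV
    choose σE hσE using hexE
    choose τV hτV using hexV'
    choose τE hτE using hexE'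
    have σsrc : ∀ e, σV (GH.s e) = GH'.s (σE e) := by
      intro e
      apply hpV'
      rw [hσV, p'.src, hσE, ← p.src]
    have σtgt : ∀ e, σV (GH.t e) = GH'.t (σE e) := by
      intro e
      apply hpV'
      rw [hσV, p'.tgt, hσE, ← p.tgt]
    have τsrc : ∀ f, τV (GH'.s f) = GH.s (τE f) := by
      intro f
      apply hp.1
      rw [hτV, p'.src, ← hτE, ← p.src]
    have τtgt : ∀ f, τV (GH'.t f) = GH.t (τE f) := by
      intro f
      apply hp.1
      rw [hτV, p'.tgt, ← hτE, ← p.tgt]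
    refine ⟨⟨σV, σE, σsrc, σtgt⟩, ⟨⟨τV, τE, τsrc, τtgt⟩, ?_, ?_⟩, ?_, ?_⟩
    · refine Hom.ext' (funext fun v => ?_) (funext fun e => ?_)
      · exact hp.1 (by rw [show ((⟨τV,τE,τsrc,τtgt⟩ : Hom GH' GH).comp ⟨σV,σE,σsrc,σtgt⟩).fV v = τV (σV v) from rfl, hτV, hσV]; rfl)
      · exact hp.2 (by rw [show ((⟨τV,τE,τsrc,τtgt⟩ : Hom GH' GH).comp ⟨σV,σE,σsrc,σtgt⟩).fE e = τE (σE e) from rfl, hτE, hσE]; rfl)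
    · refine Hom.ext' (funext fun w => ?_) (funext fun f => ?_)
      · exact hpV' (by rw [show ((⟨σV,σE,σsrc,σtgt⟩ : Hom GH GH').comp ⟨τV,τE,τsrc,τtgt⟩).fV w = σV (τV w) from rfl, hσV, hτV]; rfl)
      · exact hpE' (by rw [show ((⟨σV,σE,σsrc,σtgt⟩ : Hom GH GH').comp ⟨τV,τE,τsrc,τtgt⟩).fE f = σE (τE f) from rfl, hσE, hτE]; rfl)
    · refine Hom.ext' (funext fun x => ?_) (funext fun x => ?_)
      · exact hpV' (by rw [show ((⟨σV,σE,σsrc,σtgt⟩ : Hom GH GH').comp iG).fV x = σV (iG.fV x) from rfl, hσV, hGV])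
      · exact hpE' (by rw [show ((⟨σV,σE,σsrc,σtgt⟩ : Hom GH GH').comp iG).fE x = σE (iG.fE x) from rfl, hσE, hGE])
    · refine Hom.ext' (funext fun x => ?_) (funext fun x => ?_)
      · exact hpV' (by rw [show ((⟨σV,σE,σsrc,σtgt⟩ : Hom GH GH').comp iH).fV x = σV (iH.fV x) from rfl, hσV, hHV])
      · exact hpE' (by rw [show ((⟨σV,σE,σsrc,σtgt⟩ : Hom GH GH').comp iH).fE x = σE (iH.fE x) from rfl, hσE, hHE])
end

section
/- Let c = ∀(∅ ↪ P, d) be a constraint and t : G ⇒ H a graph transformation with track morphism track_t. Define Imp(t) as the set of impaired morphisms p : P ↪ H w.r.t. t and Rep(t) as the set of repaired morphisms p : P ↪ G w.r.t. t. Then the set of violations in H decomposes as sv_H(c) = Imp(t) ∪ { track_t ∘ p | p ∈ sv_G(c), p ∉ Rep(t) }, this union is disjoint, and consequently nv_H(c) − nv_G(c) = |Imp(t)| − |Rep(t)| (all sets being finite since graphs are finite). -/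
/-- Nested graph conditions over a graph, with an (index-typed) disjunction. -/
inductive Cond : MGraph → Type 2 where
  | tru (P : MGraph) : Cond P
  | ex {P Q : MGraph} (e : Hom P Q) (d : Cond Q) : Cond P
  | or {P : MGraph} (c₁ c₂ : Cond P) : Cond P
  | not {P : MGraph} (c : Cond P) : Cond P
  | orI {P : MGraph} {ι : Type 1} (f : ι → Cond P) : Cond P

/-- Satisfaction of a nested condition by an (injective) morphism. -/
def Sat : {P G : MGraph} → Hom P G → Cond P → Prop
  | _, _, _, .tru _ => True
  | _, _, p, .ex e d => ∃ q, q.Injective ∧ p = q.comp e ∧ Sat q d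
  | _, _, p, .or c₁ c₂ => Sat p c₁ ∨ Sat p c₂
  | _, _, p, .not c => ¬ Sat p c
  | _, _, p, .orI f => ∃ i, Sat p (f i)
/-- A morphism `p : P ↪ G` is a repaired morphism w.r.t. the transformation
`t : G ⇒ H` with interface `D` and embeddings `g : D ↪ G`, `h : D ↪ H`:
`p` violates the conclusion `d` and is either destroyed by `t`
(repair of the premise: `track_t ∘ p` is not total, i.e. there is no
`x : P ↪ D` with `g ∘ x = p`) or satisfies `d` after the transformation
(repair of the conclusion: `track_t ∘ p = h ∘ x ⊨ d`). -/
def Repaired {P D G H : MGraph} (d : Cond P) (g : Hom D G) (h : Hom D H)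
    (p : Hom P G) : Prop :=
  p.Injective ∧ ¬ Sat p d ∧
    ((¬ ∃ x : Hom P D, g.comp x = p) ∨
      (∃ x : Hom P D, g.comp x = p ∧ Sat (h.comp x) d))

/-- A morphism `p : P ↪ H` is an impaired morphism w.r.t. the transformation
`t : G ⇒ H` with interface `D` and embeddings `g : D ↪ G`, `h : D ↪ H`:
`p` violates the conclusion `d` and is either created by `t`
(impairment of the premise: there is no `p' : P ↪ G` with `p = track_t ∘ p'`)
or its preimage satisfied `d` before the transformation
(impairment of the conclusion). -/
def Impaired {P D G H : MGraph} (d : Cond P) (g : Hom D G) (h : Hom D H)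
    (p : Hom P H) : Prop :=
  p.Injective ∧ ¬ Sat p d ∧
    ((¬ ∃ x : Hom P D, h.comp x = p) ∨
      (∃ x : Hom P D, h.comp x = p ∧ Sat (g.comp x) d))

/-- The set of violations of a constraint `∀(∅ ↪ P, d)` in a graph `G`. -/
def svSet {P : MGraph} (d : Cond P) (G : MGraph) : Set (Hom P G) :=
  {q | q.Injective ∧ ¬ Sat q d}

/-- The number of violations of a constraint `∀(∅ ↪ P, d)` in a graph `G`. -/
noncomputable def nv {P : MGraph} (d : Cond P) (G : MGraph) : ℕ := (svSet d G).ncard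

/-- An application condition `∀(i_L : L ↪ PL, d')` over the left-hand side `L`. -/
structure AC (L : MGraph) : Type 2 where
  PL : MGraph
  iL : Hom L PL
  d' : Cond PL

/-- The set of violations of an application condition at a match `m : L ↪ G`. -/
def svm {L G : MGraph} (ac : AC L) (m : Hom L G) : Set (Hom ac.PL G) :=
  {p | p.Injective ∧ m = p.comp ac.iL ∧ ¬ Sat p ac.d'}

/-- The number of violations of an application condition at a match. -/
noncomputable def nvm {L G : MGraph} (ac : AC L) (m : Hom L G) : ℕ := (svm ac m).ncard

lemma Hom.ext'_s13 {G H : MGraph} {a b : Hom G H} (hV : a.fV = b.fV) (hE : a.fE = b.fE) :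
    a = b := by
  cases a; cases b; simp_all

lemma comp_inj_left {G H K : MGraph} {f : Hom H K} (hf : f.Injective) :
    Function.Injective (fun x : Hom G H => f.comp x) := by
  intro a b hab
  apply Hom.ext'_s13
  · funext v
    exact hf.1 (congrFun (congrArg Hom.fV hab) v)
  · funext e
    exact hf.2 (congrFun (congrArg Hom.fE hab) e)

lemma comp_injective {G H K : MGraph} {f : Hom H K} {x : Hom G H}
    (hf : f.Injective) (hx : x.Injective) : (f.comp x).Injective :=
  ⟨hf.1.comp hx.1, hf.2.comp hx.2⟩

lemma inj_of_comp {G H K : MGraph} {f : Hom H K} {x : Hom G H}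
    (hfx : (f.comp x).Injective) : x.Injective :=
  ⟨Function.Injective.of_comp hfx.1, Function.Injective.of_comp hfx.2⟩

/-- Decomposition of the violations of `c = ∀(∅ ↪ P, d)` after a transformation
`t : G ⇒ H` (interface `D`, injective embeddings `g : D ↪ G`, `h : D ↪ H`):
the violations in `H` are exactly the impaired morphisms together with the
track-images of the non-repaired violations in `G`; this union is disjoint, and
consequently `nv_H(c) − nv_G(c) = #impaired − #repaired`. -/
theorem stmt_13 (P D G H : MGraph) (d : Cond P) (g : Hom D G) (h : Hom D H)
    (hg : g.Injective) (hh : h.Injective)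
    (hfinG : (svSet d G).Finite) (hfinH : (svSet d H).Finite) :
    svSet d H =
      {p : Hom P H | Impaired d g h p} ∪
        {q : Hom P H | ∃ p : Hom P G, p ∈ svSet d G ∧ ¬ Repaired d g h p ∧
          ∃ x : Hom P D, g.comp x = p ∧ q = h.comp x} ∧
    Disjoint {p : Hom P H | Impaired d g h p}
        {q : Hom P H | ∃ p : Hom P G, p ∈ svSet d G ∧ ¬ Repaired d g h p ∧
          ∃ x : Hom P D, g.comp x = p ∧ q = h.comp x} ∧
    ((svSet d H).ncard : ℤ) - (svSet d G).ncard =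
      ({p : Hom P H | Impaired d g h p}).ncard -
        ({p : Hom P G | Repaired d g h p}).ncard := by
  set Imp : Set (Hom P H) := {p : Hom P H | Impaired d g h p} with hImpDef
  set Rep : Set (Hom P G) := {p : Hom P G | Repaired d g h p} with hRepDef
  set T : Set (Hom P H) :=
    {q : Hom P H | ∃ p : Hom P G, p ∈ svSet d G ∧ ¬ Repaired d g h p ∧
      ∃ x : Hom P D, g.comp x = p ∧ q = h.comp x} with hTDef
  set S : Set (Hom P D) :=
    {x : Hom P D | (g.comp x) ∈ svSet d G ∧ ¬ Repaired d g h (g.comp x)} with hSDef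
  have hT_img : T = (fun x : Hom P D => h.comp x) '' S := by
    ext q
    constructor
    · rintro ⟨p, hp, hrep, x, hgx, rfl⟩
      exact ⟨x, ⟨hgx ▸ hp, hgx ▸ hrep⟩, rfl⟩
    · rintro ⟨x, ⟨hx1, hx2⟩, rfl⟩
      exact ⟨g.comp x, hx1, hx2, x, rfl, rfl⟩
  have hNR_img : svSet d G \ Rep = (fun x : Hom P D => g.comp x) '' S := by
    ext p
    constructor
    · rintro ⟨hp, hrep⟩
      have hex : ∃ x : Hom P D, g.comp x = p := by
        by_contra hne
        exact hrep ⟨hp.1, hp.2, Or.inl hne⟩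
      obtain ⟨x, rfl⟩ := hex
      exact ⟨x, ⟨hp, hrep⟩, rfl⟩
    · rintro ⟨x, ⟨hx1, hx2⟩, rfl⟩
      exact ⟨hx1, hx2⟩
  -- main decomposition
  have hdecomp : svSet d H = Imp ∪ T := by
    ext q
    constructor
    · rintro ⟨hqinj, hqd⟩
      by_cases hex : ∃ x : Hom P D, h.comp x = q
      · obtain ⟨x, rfl⟩ := hex
        by_cases hsat : Sat (g.comp x) d
        · exact Or.inl ⟨hqinj, hqd, Or.inr ⟨x, rfl, hsat⟩⟩
        · refine Or.inr ⟨g.comp x, ⟨comp_injective hg (inj_of_comp hqinj), hsat⟩,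
            ?_, x, rfl, rfl⟩
          rintro ⟨-, -, hor⟩
          rcases hor with hne | ⟨x', hx', hsat'⟩
          · exact hne ⟨x, rfl⟩
          · exact hqd (comp_inj_left hg hx' ▸ hsat')
      · exact Or.inl ⟨hqinj, hqd, Or.inl hex⟩
    · rintro (⟨h1, h2, -⟩ | ⟨p, hp, hrep, x, hgx, rfl⟩)
      · exact ⟨h1, h2⟩
      · subst hgx
        have hne : ¬ Sat (h.comp x) d := by
          intro hsat
          exact hrep ⟨hp.1, hp.2, Or.inr ⟨x, rfl, hsat⟩⟩
        exact ⟨comp_injective hh (inj_of_comp hp.1), hne⟩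
  have hdisj : Disjoint Imp T := by
    rw [Set.disjoint_left]
    rintro q ⟨-, hqd, hor⟩ ⟨p, hp, hrep, x, hgx, rfl⟩
    rcases hor with hne | ⟨x', hx', hsat'⟩
    · exact hne ⟨x, rfl⟩
    · have : x' = x := comp_inj_left hh hx'
      subst this
      exact hp.2 (hgx ▸ hsat')
  refine ⟨hdecomp, hdisj, ?_⟩
  -- cardinalities
  have hTfin : T.Finite := hfinH.subset (hdecomp ▸ Set.subset_union_right)
  have hImpfin : Imp.Finite := hfinH.subset (hdecomp ▸ Set.subset_union_left)
  have hRepsub : Rep ⊆ svSet d G := fun p hp => ⟨hp.1, hp.2.1⟩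
  have hRepfin : Rep.Finite := hfinG.subset hRepsub
  have hH : (svSet d H).ncard = Imp.ncard + T.ncard := by
    rw [hdecomp, Set.ncard_union_eq hdisj hImpfin hTfin]
  have hG : (svSet d G \ Rep).ncard + Rep.ncard = (svSet d G).ncard :=
    Set.ncard_diff_add_ncard_of_subset hRepsub hfinG
  have hTS : T.ncard = S.ncard := by
    rw [hT_img, Set.ncard_image_of_injective _ (comp_inj_left hh)]
  have hNRS : (svSet d G \ Rep).ncard = S.ncard := by
    rw [hNR_img, Set.ncard_image_of_injective _ (comp_inj_left hg)]
  omega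
end

section
/- Let ρ be a rule with left-hand side L, c a constraint with premise P, and ac = ∀(i_L : L ↪ PL, d') a repair-indicating application condition constructed from an overlap (i_L : L ↪ PL, i_P : P ↪ PL) (a jointly surjective pair of injective morphisms). Then for any injective match m : L ↪ G, the number of violations nv_m(ac) = |{ p : PL ↪ G | m = p ∘ i_L, p ⊭ d' }| equals the cardinality of the set { p ∘ i_P : P ↪ G | p ∈ sv_m(ac) }, i.e., the map p ↦ p ∘ i_P is injective on sv_m(ac). -/
/-- For a repair-indicating application condition `ac = ∀(i_L : L ↪ PL, d')`
constructed from an overlap `(i_L, i_P, PL)` (jointly surjective injective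
morphisms), restriction along `i_P` is injective on the set of violations of
`ac` at a match `m : L ↪ G`, and hence `nv_m(ac)` equals the cardinality of
`{ p ∘ i_P | p ∈ sv_m(ac) }`. -/
theorem stmt_14 (L P PL G : MGraph) (iL : Hom L PL) (iP : Hom P PL)
    (hiL : iL.Injective) (hiP : iP.Injective) (hjs : JointlySurjective iL iP)
    (d' : Cond PL) (m : Hom L G) (hm : m.Injective) :
    Set.InjOn (fun p : Hom PL G => p.comp iP) (svm ⟨PL, iL, d'⟩ m) ∧
    nvm ⟨PL, iL, d'⟩ m =
      ((fun p : Hom PL G => p.comp iP) '' (svm ⟨PL, iL, d'⟩ m)).ncard := by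
  have hext : ∀ (p q : Hom PL G), p.fV = q.fV → p.fE = q.fE → p = q := by
    intro p q h1 h2; cases p; cases q; simp_all
  have hinj : Set.InjOn (fun p : Hom PL G => p.comp iP) (svm ⟨PL, iL, d'⟩ m) := by
    intro p hp q hq hpq
    obtain ⟨_, hpm, _⟩ := hp
    obtain ⟨_, hqm, _⟩ := hq
    have hmL : p.comp iL = q.comp iL := hpm ▸ hqm
    apply hext
    · funext v
      rcases hjs.1 v with ⟨x, rfl⟩ | ⟨y, rfl⟩
      · exact congrFun (congrArg Hom.fV hmL) x
      · exact congrFun (congrArg Hom.fV hpq) y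
    · funext e
      rcases hjs.2 e with ⟨x, rfl⟩ | ⟨y, rfl⟩
      · exact congrFun (congrArg Hom.fE hmL) x
      · exact congrFun (congrArg Hom.fE hpq) y
  exact ⟨hinj, (Set.ncard_image_of_injOn hinj).symm⟩
end
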